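/- arXiv:2110.14453 — 2 statements merged into one kernel-verified Lean document; each statement's English description precedes it below -/
import Mathlib

section
/- Let G and H be finite nonempty regular simple graphs. If G is conformable, then the direct product G × H is conformable. -/
open SimpleGraph

/-- Tensor (direct / categorical) product of simple graphs:
`(u, v)` is adjacent to `(u', v')` iff `u ~ u'` in `G` and `v ~ v'` in `H`. -/
def tensorProd {V W : Type*} (G : SimpleGraph V) (H : SimpleGraph W) :
    SimpleGraph (V × W) where
  Adj x y := G.Adj x.1 y.1 ∧ H.Adj x.2 y.2
  symm := ⟨fun _ _ h => ⟨h.1.symm, h.2.symm⟩⟩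
  loopless := ⟨fun x h => G.irrefl h.1⟩

instance {V W : Type*} (G : SimpleGraph V) (H : SimpleGraph W)
    [DecidableRel G.Adj] [DecidableRel H.Adj] : DecidableRel (tensorProd G H).Adj :=
  fun x y => inferInstanceAs (Decidable (G.Adj x.1 y.1 ∧ H.Adj x.2 y.2))

/-- `G` has a proper total coloring with `k` colors: adjacent vertices get distinct
colors, distinct incident edges get distinct colors, and each edge gets a color
distinct from those of both of its endpoints. -/
def HasTotalColoring {V : Type*} (G : SimpleGraph V) (k : ℕ) : Prop :=
  ∃ (cv : V → Fin k) (ce : Sym2 V → Fin k),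
    (∀ u v, G.Adj u v → cv u ≠ cv v) ∧
    (∀ u v w, G.Adj u v → G.Adj u w → v ≠ w → ce s(u, v) ≠ ce s(u, w)) ∧
    (∀ u v, G.Adj u v → ce s(u, v) ≠ cv u ∧ ce s(u, v) ≠ cv v)

/-- The total chromatic number: the least `k` such that `G` has a `k`-total coloring. -/
noncomputable def totalChromaticNumber {V : Type*} (G : SimpleGraph V) : ℕ :=
  sInf {k | HasTotalColoring G k}

/-- A regular graph of degree `d` is conformable if it has a proper vertex coloring with
`d + 1` colors such that every color class has cardinality of the same parity as `|V|`. -/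
def Conformable {V : Type*} [Fintype V] (G : SimpleGraph V) (d : ℕ) : Prop :=
  ∃ c : V → Fin (d + 1),
    (∀ u v, G.Adj u v → c u ≠ c v) ∧
    ∀ i : Fin (d + 1),
      (Finset.univ.filter fun v => c v = i).card % 2 = Fintype.card V % 2


/-!
Let `c` be a conformable colouring of `G` with classes `V₀, …, V_d`. Colour `(v, w)` by the pair
`(c v, f_{c v} w)`, where `fᵢ : W → Fin kᵢ` and `∑ kᵢ = d · d_H + 1`. Adjacent vertices of `G × H`
have adjacent first coordinates, so this is proper, and the class of `(i, j)` is `Vᵢ × fᵢ⁻¹(j)`.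
If `|V|` is even all these classes are even; if `|W|` is even we take every `fᵢ` constant. If `|V|`
and `|W|` are both odd, then `d` and `d_H` are even by the handshake lemma, so `d · d_H + 1` is a sum
of `d + 1` odd numbers `kᵢ ≤ |W|`, and each `fᵢ` splits `W` into `kᵢ - 1` singletons and one more
set of odd size.
-/

open Finset

section ParityFibers

variable {V W α : Type*} [Fintype V] [Fintype W]

def HasParityFibers [DecidableEq α] (f : V → α) : Prop :=
  ∀ a, #{v | f v = a} % 2 = Fintype.card V % 2

lemma HasParityFibers.equiv_comp {β : Type*} [DecidableEq α] [DecidableEq β] {f : V → α}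
    (hf : HasParityFibers f) (e : α ≃ β) : HasParityFibers (e ∘ f) := fun b => by
  simpa only [Function.comp_apply, ← e.eq_symm_apply] using hf (e.symm b)

lemma HasParityFibers.comp_equiv [DecidableEq α] {f : V → α} (hf : HasParityFibers f)
    (e : W ≃ V) : HasParityFibers (f ∘ e) := fun a => by
  rw [Fintype.card_congr e, ← hf a]
  congr 1
  exact card_equiv e (by simp)

lemma card_filter_sigma_mk_eq {κ : α → Type*} [DecidableEq α] [∀ a, DecidableEq (κ a)]
    (f : V → α) (g : ∀ a, W → κ a) (a : α) (b : κ a) :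
    #{p : V × W | (⟨f p.1, g (f p.1) p.2⟩ : Σ a, κ a) = ⟨a, b⟩} =
      #{v | f v = a} * #{w | g a w = b} := by
  rw [← card_product]
  congr 1
  ext ⟨v, w⟩
  simp only [mem_filter, mem_product, mem_univ, true_and]
  constructor
  · intro h
    obtain ⟨rfl, h⟩ := Sigma.mk.inj_iff.mp h
    exact ⟨rfl, eq_of_heq h⟩
  · rintro ⟨rfl, rfl⟩
    rfl

lemma HasParityFibers.sigma {κ : α → Type*} [DecidableEq α] [∀ a, DecidableEq (κ a)]
    {f : V → α} {g : ∀ a, W → κ a} (hf : HasParityFibers f)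
    (hg : Even (Fintype.card V) ∨ ∀ a, HasParityFibers (g a)) :
    HasParityFibers fun p : V × W => (⟨f p.1, g (f p.1) p.2⟩ : Σ a, κ a) := by
  rintro ⟨a, b⟩
  rw [card_filter_sigma_mk_eq, Fintype.card_prod, Nat.mul_mod, hf a]
  rcases hg with hV | hg
  · rw [Nat.even_iff.mp hV, Nat.even_iff.mp (hV.mul_right _), zero_mul, Nat.zero_mod]
  · rw [hg a b, ← Nat.mul_mod]

lemma hasParityFibers_const [DecidableEq α] (hV : Even (Fintype.card V)) (a : α) :
    HasParityFibers fun _ : V => a := fun b => by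
  by_cases hb : a = b <;> simp [hb, Nat.even_iff.mp hV]

lemma exists_hasParityFibers_of_odd (hW : Odd (Fintype.card W)) {k : ℕ} (hk : Odd k)
    (hkW : k ≤ Fintype.card W) : ∃ f : W → Fin k, HasParityFibers f := by
  suffices h : ∀ m, Odd m → k ≤ m → ∃ f : Fin m → Fin k, HasParityFibers f by
    obtain ⟨f, hf⟩ := h _ hW hkW
    exact ⟨f ∘ Fintype.equivFin W, hf.comp_equiv _⟩
  intro m hm hkm
  obtain ⟨n, rfl⟩ : ∃ n, k = n + 1 := ⟨k - 1, by have := hk.pos; omega⟩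
  refine ⟨fun x => ⟨min x n, by omega⟩, fun j => ?_⟩
  rw [Fintype.card_fin]
  rcases Nat.lt_succ_iff_lt_or_eq.mp j.2 with hj | hj
  · have hfiber : ({x : Fin m | (⟨min x n, by omega⟩ : Fin (n + 1)) = j} : Finset _) =
        {⟨j, by omega⟩} := by
      ext x
      simp only [mem_filter, mem_univ, true_and, mem_singleton, Fin.ext_iff]
      omega
    rw [hfiber, card_singleton, Nat.odd_iff.mp hm]
  · have hfiber : ({x : Fin m | (⟨min x n, by omega⟩ : Fin (n + 1)) = j} : Finset _) =
        Ici ⟨n, by omega⟩ := by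
      ext x
      simp only [mem_filter, mem_univ, true_and, mem_Ici, Fin.ext_iff, Fin.le_def]
      omega
    rw [hfiber, Fin.card_Ici, Fin.val_mk]
    rcases hm with ⟨a, rfl⟩
    rcases hk with ⟨b, hb⟩
    omega

end ParityFibers

lemma exists_pos_sum_eq {n T : ℕ} (hn : 0 < n) (hT : n ≤ T) :
    ∃ k : Fin n → ℕ, (∀ i, 0 < k i) ∧ ∑ i, k i = T := by
  obtain ⟨n, rfl⟩ : ∃ m, n = m + 1 := ⟨n - 1, by omega⟩
  refine ⟨Fin.cons (T - n) fun _ => 1, fun i => Fin.cases (by simp; omega) (by simp) i, ?_⟩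
  simp only [Fin.sum_univ_succ, Fin.cons_zero, Fin.cons_succ, sum_const, card_univ,
    Fintype.card_fin, smul_eq_mul, mul_one]
  omega

lemma exists_odd_le_sum_eq {b : ℕ} (hb : Odd b) :
    ∀ {n T : ℕ}, n ≤ T → T ≤ n * b → T % 2 = n % 2 →
      ∃ k : Fin n → ℕ, (∀ i, Odd (k i) ∧ k i ≤ b) ∧ ∑ i, k i = T
  | 0, T, _, hTb, _ => ⟨Fin.elim0, fun i => i.elim0, by simp_all⟩
  | n + 1, T, hnT, hTb, hpar => by
    have hb' := Nat.odd_iff.mp hb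
    have hnb : n ≤ n * b := Nat.le_mul_of_pos_right n hb.pos
    rw [add_one_mul] at hTb
    obtain ⟨k, hk, hsum⟩ := exists_odd_le_sum_eq hb (n := n) (T := T - min b (T - n))
      (by omega) (by omega) (by omega)
    have hhead : Odd (min b (T - n)) ∧ min b (T - n) ≤ b :=
      ⟨Nat.odd_iff.mpr (by omega), min_le_left _ _⟩
    refine ⟨Fin.cons (min b (T - n)) k, fun i => Fin.cases hhead hk i, ?_⟩
    rw [Fin.sum_univ_succ, Fin.cons_zero]
    simp only [Fin.cons_succ, hsum]
    omega

lemma SimpleGraph.IsRegularOfDegree.even_of_odd_card {V : Type*} [Fintype V]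
    {G : SimpleGraph V} [DecidableRel G.Adj] {d : ℕ} (hG : G.IsRegularOfDegree d)
    (hV : Odd (Fintype.card V)) : Even d := by
  have hsum : Even (Fintype.card V * d) := by
    refine even_iff_two_dvd.mpr ⟨#G.edgeFinset, ?_⟩
    rw [← G.sum_degrees_eq_twice_card_edges]
    simp [hG.degree_eq, card_univ]
  exact (Nat.even_mul.mp hsum).resolve_left (Nat.not_even_iff_odd.mpr hV)

section Conformable

variable {V W α : Type*} [Fintype V] [Fintype W] {G : SimpleGraph V} {d : ℕ}

lemma conformable_zero_of_forall_not_adj (hG : ∀ u v, ¬ G.Adj u v) : Conformable G 0 :=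
  ⟨fun _ => 0, fun u v huv => (hG u v huv).elim, fun i => by simp [Fin.fin_one_eq_zero i]⟩

lemma conformable_of_coloring [DecidableEq α] (c : V → α) (hc : ∀ u v, G.Adj u v → c u ≠ c v)
    (hpar : HasParityFibers c) (e : α ≃ Fin (d + 1)) : Conformable G d :=
  ⟨e ∘ c, fun u v huv => e.injective.ne (hc u v huv), hpar.equiv_comp e⟩

theorem Conformable.tensorProd_of_hasParityFibers (hG : Conformable G d) (H : SimpleGraph W)
    {N : ℕ} {k : Fin (d + 1) → ℕ} (hk : ∑ i, k i = N + 1) (f : ∀ i, W → Fin (k i))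
    (hf : Even (Fintype.card V) ∨ ∀ i, HasParityFibers (f i)) :
    Conformable (tensorProd G H) N := by
  obtain ⟨c, hc, hpar⟩ := hG
  refine conformable_of_coloring (fun p => (⟨c p.1, f (c p.1) p.2⟩ : Σ i, Fin (k i)))
    (fun u v huv h => hc _ _ huv.1 (congrArg Sigma.fst h)) (HasParityFibers.sigma hpar hf)
    (finSigmaFinEquiv.trans (finCongr hk))

end Conformable

theorem conformable_tensorProd_general {V W : Type*} [Fintype V] [Fintype W]
    (G : SimpleGraph V) (H : SimpleGraph W) [DecidableRel G.Adj] [DecidableRel H.Adj]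
    (dG dH : ℕ)
    (hG : G.IsRegularOfDegree dG) (hH : H.IsRegularOfDegree dH)
    (hconf : Conformable G dG) :
    Conformable (tensorProd G H) (dG * dH) := by
  rcases Nat.eq_zero_or_pos dH with rfl | hdH
  · rw [mul_zero]
    exact conformable_zero_of_forall_not_adj fun u v huv =>
      (H.degree_eq_zero u.2).mp (hH.degree_eq u.2) v.2 huv.2
  by_cases hVW : Even (Fintype.card V) ∨ Even (Fintype.card W)
  · obtain ⟨k, hpos, hk⟩ := exists_pos_sum_eq (n := dG + 1) (T := dG * dH + 1) (by omega)
      (by nlinarith)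
    exact hconf.tensorProd_of_hasParityFibers H hk (fun i _ => ⟨0, hpos i⟩)
      (hVW.imp_right fun hW _ => hasParityFibers_const hW _)
  rw [not_or, Nat.not_even_iff_odd, Nat.not_even_iff_odd] at hVW
  obtain ⟨hV, hW⟩ := hVW
  have : Nonempty W := Fintype.card_pos_iff.mp hW.pos
  have hdW : dH < Fintype.card W := hH.degree_eq (Classical.arbitrary W) ▸ H.degree_lt_card_verts _
  have hdG : Even dG := hG.even_of_odd_card hV
  have hdGdH : dG * dH % 2 = 0 := Nat.even_iff.mp (hdG.mul_right dH)
  obtain ⟨k, hodd, hk⟩ := exists_odd_le_sum_eq hW (n := dG + 1) (T := dG * dH + 1)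
    (by nlinarith) (by nlinarith) (by have := Nat.even_iff.mp hdG; omega)
  choose f hf using fun i => exists_hasParityFibers_of_odd hW (hodd i).1 (hodd i).2
  exact hconf.tensorProd_of_hasParityFibers H hk f (Or.inr hf)

theorem conformable_tensorProd {V W : Type*} [Fintype V] [Fintype W]
    [Nonempty V] [Nonempty W]
    (G : SimpleGraph V) (H : SimpleGraph W) [DecidableRel G.Adj] [DecidableRel H.Adj]
    (dG dH : ℕ)
    (hG : G.IsRegularOfDegree dG) (hH : H.IsRegularOfDegree dH)
    (hconf : Conformable G dG) :
    Conformable (tensorProd G H) (dG * dH) :=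
  conformable_tensorProd_general G H dG dH hG hH hconf
end

section
/- Let m, m', n, n' be positive integers with m ≠ m' or n ≠ n'. Then the direct product of complete bipartite graphs K_{m,m'} × K_{n,n'} is Type 1, i.e., χ_T(K_{m,m'} × K_{n,n'}) = max(m,m') · max(n,n') + 1. -/
open SimpleGraph

/-!
`K_{m,m'} × K_{n,n'}` is the disjoint union of `K_{mn,m'n'}` and `K_{mn',m'n}`. With `a ≤ b`,
`K_{a,b}` has a total colouring with `b + 1` colours if `a < b` and with `b + 2` colours if
`a = b`: colour the edge `{i, j}` by `i + j mod b`. Each part has sides of size at most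
`Δ = max m m' * max n n'`, and if a part is balanced, its side size is strictly smaller than `Δ`
unless `m = m'` and `n = n'`. So `Δ + 1` colours suffice, and they are needed at a vertex of
degree `Δ`.
-/

theorem eq_of_add_mod_eq_add_mod {b c x y : ℕ} (hx : x < b) (hy : y < b)
    (h : (c + x) % b = (c + y) % b) : x = y := by
  have := Nat.mod_injOn_Ico c b (by simp; omega) (by simp; omega) h
  omega

theorem mul_lt_max_mul_max_of_mul_eq {a b c d : ℕ} (hab : 0 < a * b) (h : a * b = c * d)
    (hne : a ≠ c ∨ b ≠ d) : a * b < max a c * max b d := by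
  have hcd : 0 < c * d := h ▸ hab
  have eq_max : ∀ {x y : ℕ}, 0 < x * y → x ≤ max a c → y ≤ max b d →
      x * y = max a c * max b d → x = max a c ∧ y = max b d := fun hxy hx hy hE =>
    (mul_eq_mul_iff_eq_and_eq_of_pos hx hy (Nat.pos_of_mul_pos_right hxy)
      ((Nat.pos_of_mul_pos_left hxy).trans_le hy)).1 hE
  refine lt_of_le_of_ne (Nat.mul_le_mul (le_max_left _ _) (le_max_left _ _)) fun hE => ?_
  obtain ⟨ha, hb⟩ := eq_max hab (le_max_left _ _) (le_max_left _ _) hE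
  obtain ⟨hc, hd⟩ := eq_max hcd (le_max_right _ _) (le_max_right _ _) (h ▸ hE)
  omega

variable {V W : Type*} {G : SimpleGraph V} {H : SimpleGraph W} {k : ℕ}

namespace HasTotalColoring

theorem comap (hc : HasTotalColoring G k) (f : H →g G) (hf : Function.Injective f) :
    HasTotalColoring H k := by
  obtain ⟨cv, ce, hv, he, hve⟩ := hc
  refine ⟨cv ∘ f, ce ∘ Sym2.map f, ?_, ?_, ?_⟩
  · exact fun u v huv => hv _ _ (f.map_adj huv)
  · exact fun u v w huv huw hvw => he _ _ _ (f.map_adj huv) (f.map_adj huw) (hf.ne hvw)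
  · exact fun u v huv => hve _ _ (f.map_adj huv)

theorem sum (hG : HasTotalColoring G k) (hH : HasTotalColoring H k) :
    HasTotalColoring (G ⊕g H) k := by
  obtain ⟨cv, ce, hv, he, hve⟩ := hG
  obtain ⟨dv, de, hv', he', hve'⟩ := hH
  -- Mixed pairs span no edge; colouring them by their left vertex just keeps `c` symmetric.
  let c : V ⊕ W → V ⊕ W → Fin k
    | .inl v, .inl v' => ce s(v, v')
    | .inr w, .inr w' => de s(w, w')
    | .inl v, .inr _ => cv v
    | .inr _, .inl v => cv v
  have hc : ∀ x y, c x y = c y x := by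
    rintro (v | w) (v' | w') <;> simp only [c, Sym2.eq_swap]
  refine ⟨Sum.elim cv dv, Sym2.lift ⟨c, hc⟩, ?_, ?_, ?_⟩
  · rintro (v | w) (v' | w') h <;> simp_all
  · rintro (v | w) (v' | w') (v'' | w'') h h' hne <;> simp_all [c]
  · rintro (v | w) (v' | w') h <;> simp_all [c]

theorem degree_lt (hc : HasTotalColoring G k) (v : V) [Fintype (G.neighborSet v)] :
    G.degree v < k := by
  obtain ⟨cv, ce, -, he, hve⟩ := hc
  let colour : Option (G.neighborSet v) → Fin k := fun o => o.elim (cv v) (fun w => ce s(v, w))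
  have : Function.Injective colour := by
    rintro (_ | ⟨w, hw⟩) (_ | ⟨w', hw'⟩) h
    · rfl
    · exact absurd h.symm (hve v w' hw').1
    · exact absurd h (hve v w hw).1
    · by_contra hne
      exact he v w w' hw hw' (by simpa using hne) h
  have hcard := Fintype.card_le_of_injective colour this
  rwa [Fintype.card_option, card_neighborSet_eq_degree, Fintype.card_fin] at hcard

end HasTotalColoring

section CompleteBipartite

variable {α β : Type*}

theorem hasTotalColoring_completeBipartiteGraph_of (cα : α → Fin k) (cβ : β → Fin k)
    (ce : Sym2 (α ⊕ β) → Fin k) (hv : ∀ a b, cα a ≠ cβ b)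
    (hα : ∀ a b b', b ≠ b' → ce s(.inl a, .inr b) ≠ ce s(.inl a, .inr b'))
    (hβ : ∀ a a' b, a ≠ a' → ce s(.inl a, .inr b) ≠ ce s(.inl a', .inr b))
    (hαe : ∀ a b, ce s(.inl a, .inr b) ≠ cα a) (hβe : ∀ a b, ce s(.inl a, .inr b) ≠ cβ b) :
    HasTotalColoring (completeBipartiteGraph α β) k := by
  refine ⟨Sum.elim cα cβ, ce, ?_, ?_, ?_⟩
  · rintro (a | b) (a' | b') h <;> simp_all [Ne.symm]
  · rintro (a | b) (a' | b') (a'' | b'') h h' hne <;>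
      simp_all [Sym2.eq_swap (a := Sum.inr _)]
  · rintro (a | b) (a' | b') h <;> simp_all [Sym2.eq_swap (a := Sum.inr _), Ne.symm]

/-- Vertices of the small side get colour `b`, which no edge uses; vertex `j` of the large side
gets `a + j mod b`, the one edge colour missing at it, or the extra colour `b + 1` if `a = b`. -/
theorem hasTotalColoring_completeBipartiteGraph_fin {a b : ℕ} (hab : a ≤ b) (hbk : b < k)
    (heq : a = b → b + 1 < k) : HasTotalColoring (completeBipartiteGraph (Fin a) (Fin b)) k := by
  let idx : Fin a ⊕ Fin b → ℕ := Sum.elim Fin.val Fin.val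
  have hb : ∀ x : Fin a ⊕ Fin b, 0 < b := by
    rintro (i | j) <;> [have := i.isLt; have := j.isLt] <;> omega
  let c : Fin a ⊕ Fin b → Fin a ⊕ Fin b → Fin k := fun x y =>
    ⟨(idx x + idx y) % b, (Nat.mod_lt _ (hb x)).trans hbk⟩
  have hc : ∀ x y, c x y = c y x := fun x y => by simp only [c, Nat.add_comm]
  refine hasTotalColoring_completeBipartiteGraph_of (fun _ => ⟨b, hbk⟩)
    (fun j => if h : a < b then ⟨(a + j) % b, (Nat.mod_lt _ (by omega)).trans hbk⟩
      else ⟨b + 1, heq (by omega)⟩) (Sym2.lift ⟨c, hc⟩) ?_ ?_ ?_ ?_ ?_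
  · intro i j
    split_ifs with h
    · simp [Fin.ext_iff, (Nat.mod_lt _ (hb (.inr j))).ne']
    · simp [Fin.ext_iff]
  · intro i j j' hjj' h
    exact hjj' (Fin.ext (eq_of_add_mod_eq_add_mod j.isLt j'.isLt (by simpa [c, idx] using h)))
  · intro i i' j hii' h
    refine hii' (Fin.ext (eq_of_add_mod_eq_add_mod (c := j) (i.isLt.trans_le hab)
      (i'.isLt.trans_le hab) ?_))
    simpa [c, idx, Nat.add_comm _ (j : ℕ)] using h
  · intro i j
    simp [Fin.ext_iff, c, (Nat.mod_lt _ (hb (.inr j))).ne]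
  · intro i j
    split_ifs with h
    · intro h'
      have h'' : ((j : ℕ) + i) % b = (j + a) % b := by
        simpa [Fin.ext_iff, c, idx, Nat.add_comm] using h'
      exact absurd (eq_of_add_mod_eq_add_mod (i.isLt.trans_le hab) h h'') (by omega)
    · have := Nat.mod_lt ((i : ℕ) + j) (hb (.inr j))
      simp [Fin.ext_iff, c, idx]
      omega

def completeBipartiteGraphSwap : completeBipartiteGraph α β ≃g completeBipartiteGraph β α where
  __ := Equiv.sumComm α β
  map_rel_iff' := by rintro (a | b) (a' | b') <;> simp

theorem hasTotalColoring_completeBipartiteGraph [Fintype α] [Fintype β]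
    (hk : max (Fintype.card α) (Fintype.card β) < k)
    (heq : Fintype.card α = Fintype.card β → Fintype.card α + 1 < k) :
    HasTotalColoring (completeBipartiteGraph α β) k := by
  let eα := Fintype.equivFin α
  let eβ := Fintype.equivFin β
  rcases le_total (Fintype.card α) (Fintype.card β) with h | h
  · let e := completeBipartiteGraphCongr eα eβ
    exact (hasTotalColoring_completeBipartiteGraph_fin h (by omega) (fun _ => by omega)).comap
      e.toHom e.injective
  · let e : completeBipartiteGraph α β ≃g _ :=
      completeBipartiteGraphSwap.trans (completeBipartiteGraphCongr eβ eα)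
    exact (hasTotalColoring_completeBipartiteGraph_fin h (by omega) (fun _ => by omega)).comap
      e.toHom e.injective

end CompleteBipartite

section Degree

variable [Fintype V] [Fintype W] [DecidableRel G.Adj] [DecidableRel H.Adj]

theorem degree_tensorProd (v : V) (w : W) :
    (tensorProd G H).degree (v, w) = G.degree v * H.degree w := by
  have : (tensorProd G H).neighborFinset (v, w) = G.neighborFinset v ×ˢ H.neighborFinset w := by
    ext ⟨x, y⟩
    simp only [mem_neighborFinset, Finset.mem_product]
    rfl
  rw [← card_neighborFinset_eq_degree, this, Finset.card_product, card_neighborFinset_eq_degree,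
    card_neighborFinset_eq_degree]

end Degree

section CompleteBipartiteDegree

variable {α β : Type*} [Fintype α] [Fintype β] [DecidableRel (completeBipartiteGraph α β).Adj]

theorem degree_completeBipartiteGraph_inl (a : α) :
    (completeBipartiteGraph α β).degree (.inl a) = Fintype.card β := by
  have : (completeBipartiteGraph α β).neighborFinset (.inl a) = Finset.univ.map .inr := by
    ext (x | y) <;> simp
  rw [← card_neighborFinset_eq_degree, this, Finset.card_map, Finset.card_univ]

theorem degree_completeBipartiteGraph_inr (b : β) :
    (completeBipartiteGraph α β).degree (.inr b) = Fintype.card α := by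
  have : (completeBipartiteGraph α β).neighborFinset (.inr b) = Finset.univ.map .inl := by
    ext (x | y) <;> simp
  rw [← card_neighborFinset_eq_degree, this, Finset.card_map, Finset.card_univ]

theorem exists_degree_completeBipartiteGraph_eq_max [Nonempty α] [Nonempty β] :
    ∃ v, (completeBipartiteGraph α β).degree v = max (Fintype.card α) (Fintype.card β) := by
  rcases le_total (Fintype.card α) (Fintype.card β) with h | h
  · exact ⟨.inl (Classical.arbitrary α), by rw [degree_completeBipartiteGraph_inl, max_eq_right h]⟩
  · exact ⟨.inr (Classical.arbitrary β), by rw [degree_completeBipartiteGraph_inr, max_eq_left h]⟩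

end CompleteBipartiteDegree

def tensorProdCompleteBipartiteIso (α α' β β' : Type*) :
    tensorProd (completeBipartiteGraph α α') (completeBipartiteGraph β β') ≃g
      completeBipartiteGraph (α × β) (α' × β') ⊕g completeBipartiteGraph (α × β') (α' × β) where
  toFun
    | (.inl a, .inl b) => .inl (.inl (a, b))
    | (.inr a, .inr b) => .inl (.inr (a, b))
    | (.inl a, .inr b) => .inr (.inl (a, b))
    | (.inr a, .inl b) => .inr (.inr (a, b))
  invFun
    | .inl (.inl (a, b)) => (.inl a, .inl b)
    | .inl (.inr (a, b)) => (.inr a, .inr b)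
    | .inr (.inl (a, b)) => (.inl a, .inr b)
    | .inr (.inr (a, b)) => (.inr a, .inl b)
  left_inv := by rintro ⟨a | a, b | b⟩ <;> rfl
  right_inv := by rintro ((⟨a, b⟩ | ⟨a, b⟩) | (⟨a, b⟩ | ⟨a, b⟩)) <;> rfl
  map_rel_iff' := by
    rintro ⟨a | a, b | b⟩ ⟨a' | a', b' | b'⟩ <;> simp [tensorProd]

theorem hasTotalColoring_completeBipartiteGraph_fin_prod {a b c d : ℕ} (hab : 0 < a * b)
    (hne : a ≠ c ∨ b ≠ d) :
    HasTotalColoring (completeBipartiteGraph (Fin a × Fin b) (Fin c × Fin d))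
      (max a c * max b d + 1) := by
  refine hasTotalColoring_completeBipartiteGraph ?_ fun hE => ?_ <;>
    simp only [Fintype.card_prod, Fintype.card_fin] at *
  · have := Nat.mul_le_mul (le_max_left a c) (le_max_left b d)
    have := Nat.mul_le_mul (le_max_right a c) (le_max_right b d)
    omega
  · have := mul_lt_max_mul_max_of_mul_eq hab hE hne
    omega

theorem completeBipartite_tensor_type1 (m m' n n' : ℕ)
    (hm : 0 < m) (hm' : 0 < m') (hn : 0 < n) (hn' : 0 < n')
    (h : m ≠ m' ∨ n ≠ n') :
    totalChromaticNumber (tensorProd (completeBipartiteGraph (Fin m) (Fin m'))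
        (completeBipartiteGraph (Fin n) (Fin n'))) = max m m' * max n n' + 1 := by
  classical
  have colouring : HasTotalColoring (tensorProd (completeBipartiteGraph (Fin m) (Fin m'))
      (completeBipartiteGraph (Fin n) (Fin n'))) (max m m' * max n n' + 1) := by
    have hcross := hasTotalColoring_completeBipartiteGraph_fin_prod (Nat.mul_pos hm hn')
      (h.imp id Ne.symm)
    rw [max_comm n'] at hcross
    let e := tensorProdCompleteBipartiteIso (Fin m) (Fin m') (Fin n) (Fin n')
    exact ((hasTotalColoring_completeBipartiteGraph_fin_prod (Nat.mul_pos hm hn) h).sum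
      hcross).comap e.toHom e.injective
  have := Fin.pos_iff_nonempty.1 hm
  have := Fin.pos_iff_nonempty.1 hm'
  have := Fin.pos_iff_nonempty.1 hn
  have := Fin.pos_iff_nonempty.1 hn'
  obtain ⟨x, hx⟩ := exists_degree_completeBipartiteGraph_eq_max (α := Fin m) (β := Fin m')
  obtain ⟨y, hy⟩ := exists_degree_completeBipartiteGraph_eq_max (α := Fin n) (β := Fin n')
  refine IsLeast.csInf_eq ⟨colouring, fun k hk => ?_⟩
  simpa [degree_tensorProd, hx, hy] using hk.degree_lt (x, y)
end
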